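/- Let R be a commutative ring, k a positive integer, Q a proper ideal of R, and φ : 𝓘(R) → 𝓘(R) ∪ {∅} a function such that φ(Q) is an ideal of R contained in Q and √(φ(Q)) is a k-absorbing ideal of R. Then Q is a φ-(k+1)-absorbing primary ideal of R if and only if Q is a (k+1)-absorbing primary ideal of R. -/
import Mathlib


open Finset

/-- A proper ideal `Q` is `φ`-`k`-absorbing if whenever a product of `k+1` elements
lies in `Q \ φ Q`, the product of some `k` of them lies in `Q`. -/
def IsPhiKAbsorbing {R : Type*} [CommRing R] (φ : Ideal R → Set R) (k : ℕ)
    (Q : Ideal R) : Prop :=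
  Q ≠ ⊤ ∧ ∀ r : Fin (k + 1) → R, (∏ i, r i) ∈ (Q : Set R) \ φ Q →
    ∃ j : Fin (k + 1), (∏ i ∈ univ.erase j, r i) ∈ Q

/-- A proper ideal `Q` is `k`-absorbing. -/
def IsKAbsorbing {R : Type*} [CommRing R] (k : ℕ) (Q : Ideal R) : Prop :=
  Q ≠ ⊤ ∧ ∀ r : Fin (k + 1) → R, (∏ i, r i) ∈ Q →
    ∃ j : Fin (k + 1), (∏ i ∈ univ.erase j, r i) ∈ Q

/-- A proper ideal `Q` is `φ`-`k`-absorbing primary: whenever a product of `k+1`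
elements `r 0, …, r k` lies in `Q \ φ Q`, either the product of the first `k` of them
lies in `Q`, or the product omitting some `r j` with `j ≠ Fin.last k` lies in `√Q`. -/
def IsPhiKAbsorbingPrimary {R : Type*} [CommRing R] (φ : Ideal R → Set R) (k : ℕ)
    (Q : Ideal R) : Prop :=
  Q ≠ ⊤ ∧ ∀ r : Fin (k + 1) → R, (∏ i, r i) ∈ (Q : Set R) \ φ Q →
    (∏ i ∈ univ.erase (Fin.last k), r i) ∈ Q ∨
      ∃ j : Fin (k + 1), j ≠ Fin.last k ∧ (∏ i ∈ univ.erase j, r i) ∈ Q.radical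

/-- A proper ideal `Q` is `k`-absorbing primary. -/
def IsKAbsorbingPrimary {R : Type*} [CommRing R] (k : ℕ) (Q : Ideal R) : Prop :=
  Q ≠ ⊤ ∧ ∀ r : Fin (k + 1) → R, (∏ i, r i) ∈ Q →
    (∏ i ∈ univ.erase (Fin.last k), r i) ∈ Q ∨
      ∃ j : Fin (k + 1), j ≠ Fin.last k ∧ (∏ i ∈ univ.erase j, r i) ∈ Q.radical

/-- A proper ideal `Q` is weakly `k`-absorbing primary. -/
def IsWeaklyKAbsorbingPrimary {R : Type*} [CommRing R] (k : ℕ) (Q : Ideal R) : Prop :=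
  Q ≠ ⊤ ∧ ∀ r : Fin (k + 1) → R, (∏ i, r i) ≠ 0 → (∏ i, r i) ∈ Q →
    (∏ i ∈ univ.erase (Fin.last k), r i) ∈ Q ∨
      ∃ j : Fin (k + 1), j ≠ Fin.last k ∧ (∏ i ∈ univ.erase j, r i) ∈ Q.radical

/-- `φ` is a reduction function on the ideals of `R`. -/
def IsReductionFunction {R : Type*} [CommRing R] (φ : Ideal R → Set R) : Prop :=
  (∀ P : Ideal R, φ P ⊆ (P : Set R)) ∧ ∀ P Q : Ideal R, P ≤ Q → φ P ⊆ φ Q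

lemma erase_last_eq (n : ℕ) :
    (univ.erase (Fin.last n)) = univ.map Fin.castSuccEmb := by
  ext i
  simp only [mem_erase, mem_univ, and_true, mem_map]
  constructor
  · intro h
    obtain ⟨j, rfl⟩ := Fin.exists_castSucc_eq.2 h
    exact ⟨j, by simp, rfl⟩
  · rintro ⟨j, -, rfl⟩
    exact (Fin.castSucc_lt_last j).ne

lemma prod_erase_last {M : Type*} [CommMonoid M] (n : ℕ) (f : Fin (n+1) → M) :
    ∏ i ∈ univ.erase (Fin.last n), f i = ∏ i : Fin n, f i.castSucc := by
  rw [erase_last_eq, Finset.prod_map]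
  rfl

lemma prod_erase_castSucc {M : Type*} [CommMonoid M] (n : ℕ) (f : Fin (n+1) → M) (j : Fin n) :
    ∏ i ∈ univ.erase j.castSucc, f i
      = (∏ i ∈ univ.erase j, f i.castSucc) * f (Fin.last n) := by
  have h1 : (univ : Finset (Fin (n+1))) = insert (Fin.last n) (univ.map Fin.castSuccEmb) := by
    rw [← erase_last_eq, Finset.insert_erase (mem_univ _)]
  have h2 : (univ.map Fin.castSuccEmb).erase (Fin.castSucc j)
      = (univ.erase j).map Fin.castSuccEmb := by
    exact (Finset.map_erase Fin.castSuccEmb univ j).symm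
  rw [h1, Finset.erase_insert_of_ne (Fin.castSucc_lt_last j).ne', h2,
    Finset.prod_insert, Finset.prod_map, mul_comm]
  · rfl
  · intro h
    obtain ⟨x, -, hx⟩ := Finset.mem_map.1 h
    exact (Fin.castSucc_lt_last x).ne hx

theorem stmt18 {R : Type*} [CommRing R] (φ : Ideal R → Set R) (k : ℕ) (hk : 0 < k)
    (Q J : Ideal R) (hQtop : Q ≠ ⊤) (hJ : φ Q = (J : Set R)) (hJQ : J ≤ Q)
    (hJrad : IsKAbsorbing k J.radical) :
    IsPhiKAbsorbingPrimary φ (k + 1) Q ↔ IsKAbsorbingPrimary (k + 1) Q := by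
  constructor
  · rintro ⟨-, h⟩
    refine ⟨hQtop, fun r hr => ?_⟩
    by_cases hmem : (∏ i, r i) ∈ φ Q
    · -- the product lies in J
      rw [hJ] at hmem
      set r' : Fin (k + 1) → R := fun i =>
        if i = Fin.last k then r i.castSucc * r (Fin.last (k + 1)) else r i.castSucc with hr'
      have hlastval : r' (Fin.last k) = r ((Fin.last k).castSucc) * r (Fin.last (k + 1)) := by
        simp [hr']
      have hother : ∀ i : Fin (k + 1), i ≠ Fin.last k → r' i = r i.castSucc := by
        intro i hi; simp [hr', hi]
      have hprod : ∏ i, r' i = ∏ i, r i := by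
        rw [Fin.prod_univ_castSucc (f := r'), Fin.prod_univ_castSucc (f := r),
          Fin.prod_univ_castSucc (f := fun i : Fin (k + 1) => r i.castSucc), hlastval]
        rw [Finset.prod_congr rfl
          (fun i _ => hother i.castSucc (Fin.castSucc_lt_last i).ne : ∀ i ∈ univ,
            r' i.castSucc = r i.castSucc.castSucc)]
        ring
      obtain ⟨j, hj⟩ := hJrad.2 r' (by rw [hprod]; exact Ideal.le_radical hmem)
      by_cases hjlast : j = Fin.last k
      · subst hjlast
        rw [prod_erase_last] at hj
        have hj' : (∏ i : Fin k, r i.castSucc.castSucc) ∈ J.radical := by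
          rwa [Finset.prod_congr rfl
            (fun i _ => hother i.castSucc (Fin.castSucc_lt_last i).ne : ∀ i ∈ univ,
              r' i.castSucc = r i.castSucc.castSucc)] at hj
        right
        refine ⟨(Fin.last k).castSucc, (Fin.castSucc_lt_last _).ne, ?_⟩
        rw [prod_erase_castSucc, prod_erase_last]
        exact Ideal.mul_mem_right _ _ (Ideal.radical_mono hJQ hj')
      · right
        refine ⟨j.castSucc, (Fin.castSucc_lt_last _).ne, ?_⟩
        rw [prod_erase_castSucc]
        have hlastmem : Fin.last k ∈ univ.erase j :=
          Finset.mem_erase.2 ⟨Ne.symm hjlast, mem_univ _⟩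
        rw [← Finset.mul_prod_erase _ r' hlastmem, hlastval,
          Finset.prod_congr rfl
            (fun i hi => hother i (Finset.mem_erase.1 hi).1 : ∀ i ∈ (univ.erase j).erase
              (Fin.last k), r' i = r i.castSucc)] at hj
        rw [← Finset.mul_prod_erase _ (fun i : Fin (k + 1) => r i.castSucc) hlastmem]
        refine Ideal.radical_mono hJQ ?_
        have heq : (r (Fin.last k).castSucc * ∏ i ∈ (univ.erase j).erase (Fin.last k),
            r i.castSucc) * r (Fin.last (k + 1))
            = r (Fin.last k).castSucc * r (Fin.last (k + 1)) *
              ∏ i ∈ (univ.erase j).erase (Fin.last k), r i.castSucc := by ring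
        rw [heq]
        exact hj
    · exact h r ⟨hr, hmem⟩
  · rintro ⟨-, h⟩
    exact ⟨hQtop, fun r hr => h r hr.1⟩
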